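/- Let (x_n) be a bounded real sequence and (p_i) positive weights with P_n → ∞ and n p_n / P_n → 0. If the Riesz means t_n = (1/P_n) ∑_{i=1}^n p_i x_i converge to L and x_{n+1} − x_n = o(p_n / P_n) (a Tauberian gap condition), then x_n → L. -/
import Mathlib


open Filter Finset Topology Asymptotics

/-- Tauberian gap condition: if `(x n)` is bounded, `P n → ∞`,
`n * p n / P n → 0`, the Riesz means `t n → L`, and
`x (n+1) - x n = o(p n / P n)`, then `x n → L`. -/
theorem stmt_19 (p : ℕ → ℝ) (hp : ∀ i, 0 < p i)
    (P : ℕ → ℝ) (hP : ∀ n, P n = ∑ i ∈ Finset.Icc 1 n, p i)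
    (hPinf : Tendsto P atTop atTop)
    (x : ℕ → ℝ) (hbdd : ∃ B : ℝ, ∀ n, |x n| ≤ B)
    (hreg : Tendsto (fun n : ℕ => (n : ℝ) * p n / P n) atTop (𝓝 0))
    (t : ℕ → ℝ)
    (ht : ∀ n, t n = (P n)⁻¹ * ∑ i ∈ Finset.Icc 1 n, p i * x i)
    (L : ℝ) (htL : Tendsto t atTop (𝓝 L))
    (hgap : (fun n => x (n + 1) - x n) =o[atTop] fun n => p n / P n) :
    Tendsto x atTop (𝓝 L) := by
  set d : ℕ → ℝ := fun n => x (n + 1) - x n with hd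
  have hP0 : P 0 = 0 := by simp [hP]
  have hPsucc : ∀ n, P (n + 1) = P n + p (n + 1) := by
    intro n
    rw [hP, hP, Finset.sum_Icc_succ_top (by omega)]
  have hPpos : ∀ n, 1 ≤ n → 0 < P n := by
    intro n hn
    rw [hP]
    exact Finset.sum_pos (fun i _ => hp i) (Finset.nonempty_Icc.2 hn)
  have hrange : ∀ n, ∑ i ∈ Finset.range (n + 1), p i = p 0 + P n := by
    intro n
    induction n with
    | zero => simp [hP0]
    | succ k ih => rw [Finset.sum_range_succ, ih, hPsucc]; ring
  -- Abel summation identity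
  have habel : ∀ n, P n * x n - ∑ i ∈ Finset.Icc 1 n, p i * x i
      = ∑ j ∈ Finset.range n, P j * d j := by
    intro n
    induction n with
    | zero => simp [hP0]
    | succ k ih =>
      rw [Finset.sum_range_succ, ← ih, hPsucc, Finset.sum_Icc_succ_top (by omega)]
      simp only [hd]
      ring
  -- p n / P n → 0
  have hp1 : Tendsto (fun n : ℕ => p n / P n) atTop (𝓝 0) := by
    apply squeeze_zero' ?_ ?_ hreg
    · filter_upwards [eventually_ge_atTop 1] with n hn
      exact div_nonneg (hp n).le (hPpos n hn).le
    · filter_upwards [eventually_ge_atTop 1] with n hn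
      have h1 : (1 : ℝ) ≤ n := by exact_mod_cast hn
      rw [mul_div_assoc]
      exact le_mul_of_one_le_left (div_nonneg (hp n).le (hPpos n hn).le) h1
  -- P j * d j = o(p j)
  have hglit : (fun n => P n * d n) =o[atTop] p := by
    have h1 : (fun n => P n * d n) =o[atTop] fun n => P n * (p n / P n) :=
      (isBigO_refl P atTop).mul_isLittleO hgap
    refine h1.congr' (EventuallyEq.refl _ _) ?_
    filter_upwards [eventually_ge_atTop 1] with n hn
    rw [mul_div_cancel₀ _ (hPpos n hn).ne']
  have hpsum_top : Tendsto (fun n => ∑ i ∈ Finset.range n, p i) atTop atTop := by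
    rw [← tendsto_add_atTop_iff_nat 1]
    simp only [hrange]
    exact tendsto_atTop_add_const_left _ _ hPinf
  have hsum : (fun n => ∑ j ∈ Finset.range n, P j * d j) =o[atTop]
      fun n => ∑ i ∈ Finset.range n, p i :=
    hglit.sum_range (fun i => (hp i).le) hpsum_top
  -- (∑_{i<n} p i) / P n → 1
  have hp0P : Tendsto (fun n : ℕ => p 0 / P n) atTop (𝓝 0) :=
    tendsto_const_nhds.div_atTop hPinf
  have hratio : Tendsto (fun n => (∑ i ∈ Finset.range n, p i) / P n) atTop (𝓝 1) := by
    rw [← tendsto_add_atTop_iff_nat 1]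
    have heq : ∀ n : ℕ, (∑ i ∈ Finset.range (n + 1), p i) / P (n + 1)
        = p 0 / P (n + 1) + 1 - p (n + 1) / P (n + 1) := by
      intro n
      have h := (hPpos (n + 1) (by omega)).ne'
      have hPn : P n = P (n + 1) - p (n + 1) := by linarith [hPsucc n]
      rw [hrange, hPn]
      field_simp
      ring
    simp only [heq]
    have h1 : Tendsto (fun n : ℕ => p 0 / P (n + 1)) atTop (𝓝 0) :=
      (tendsto_add_atTop_iff_nat 1).mpr hp0P
    have h2 : Tendsto (fun n : ℕ => p (n + 1) / P (n + 1)) atTop (𝓝 0) :=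
      (tendsto_add_atTop_iff_nat 1).mpr hp1
    have h3 : Tendsto (fun n : ℕ => p 0 / P (n + 1) + 1 - p (n + 1) / P (n + 1))
        atTop (𝓝 (0 + 1 - 0)) := (h1.add (tendsto_const_nhds (x := (1 : ℝ)))).sub h2
    simpa using h3
  -- main limit
  have hmain : Tendsto (fun n => (∑ j ∈ Finset.range n, P j * d j) / P n) atTop (𝓝 0) := by
    have h1 := hsum.tendsto_div_nhds_zero
    have h2 := h1.mul hratio
    rw [zero_mul] at h2
    refine Tendsto.congr' ?_ h2
    filter_upwards [eventually_ge_atTop 1] with n hn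
    have hPn := (hPpos n hn).ne'
    have hpn : (∑ i ∈ Finset.range n, p i) ≠ 0 := by
      have : 0 < ∑ i ∈ Finset.range n, p i :=
        Finset.sum_pos (fun i _ => hp i) ⟨0, by simp; omega⟩
      exact this.ne'
    field_simp
  have hxt : Tendsto (fun n => x n - t n) atTop (𝓝 0) := by
    refine Tendsto.congr' ?_ hmain
    filter_upwards [eventually_ge_atTop 1] with n hn
    have hPn := (hPpos n hn).ne'
    rw [← habel, ht]
    field_simp
  have hfin : Tendsto (fun n => (x n - t n) + t n) atTop (𝓝 (0 + L)) := hxt.add htL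
  simpa using hfin
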